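/- Let (u,v,w) be a G₂-frame in ℝ⁷ (orthonormal with φ₀(u,v,w)=0), R = χ(u,v,w) and R′ = (u×v+v×w+w×u)/√3. Then √3 (R′×u) = R + v − w, √3 (R′×v) = R + w − u, and √3 (R′×w) = R + u − v. -/

import Mathlib

open scoped RealInnerProductSpace

noncomputable section

/-- ℝ⁷ with its Euclidean inner product. -/
abbrev V7 := EuclideanSpace ℝ (Fin 7)

/-- The standard G₂ 3-form φ₀ = e¹²³+e¹⁴⁵+e¹⁶⁷+e²⁴⁶−e²⁵⁷−e³⁴⁷−e³⁵⁶ on ℝ⁷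
(indices shifted to 0-based), written as a trilinear alternating function. -/
def phi0 : (Fin 3 → V7) → ℝ := fun v =>
  let m : Fin 7 → Fin 7 → Fin 7 → ℝ := fun i j k =>
    Matrix.det !![v 0 i, v 0 j, v 0 k; v 1 i, v 1 j, v 1 k; v 2 i, v 2 j, v 2 k]
  m 0 1 2 + m 0 3 4 + m 0 5 6 + m 1 3 5 - m 1 4 6 - m 2 3 6 - m 2 4 5

/-- The 4-form ∗φ₀ = e⁴⁵⁶⁷+e²³⁶⁷+e²³⁴⁵+e¹³⁵⁷−e¹³⁴⁶−e¹²⁵⁶−e¹²⁴⁷ (0-based indices). -/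
def starPhi0 : (Fin 4 → V7) → ℝ := fun v =>
  let m : Fin 7 → Fin 7 → Fin 7 → Fin 7 → ℝ := fun i j k l =>
    Matrix.det !![v 0 i, v 0 j, v 0 k, v 0 l; v 1 i, v 1 j, v 1 k, v 1 l;
                  v 2 i, v 2 j, v 2 k, v 2 l; v 3 i, v 3 j, v 3 k, v 3 l]
  m 3 4 5 6 + m 1 2 5 6 + m 1 2 3 4 + m 0 2 4 6 - m 0 2 3 5 - m 0 1 4 5 - m 0 1 3 6

/-- The cross product on ℝ⁷: the unique vector with ⟨u×v, z⟩ = φ₀(u,v,z) for all z. -/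
def cross (u v : V7) : V7 := WithLp.toLp 2 (fun i => phi0 ![u, v, EuclideanSpace.single i 1])

/-- The triple cross product χ: the unique vector with ⟨χ(u,v,w), z⟩ = ∗φ₀(u,v,w,z). -/
def chi (u v w : V7) : V7 := WithLp.toLp 2 (fun i => starPhi0 ![u, v, w, EuclideanSpace.single i 1])

/-- Interior product ξ⌟α : contraction of a (k+1)-form with ξ in its first slot. -/
def iprod {k : ℕ} (ξ : V7) (α : (Fin (k + 1) → V7) → ℝ) : (Fin k → V7) → ℝ :=
  fun v => α (Fin.cons ξ v)

/-- Wedge product of alternating forms (determinant convention). -/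
def wedge {p q : ℕ} (α : (Fin p → V7) → ℝ) (β : (Fin q → V7) → ℝ) :
    (Fin (p + q) → V7) → ℝ := fun v =>
  (1 / ((p.factorial : ℝ) * q.factorial)) *
    ∑ σ : Equiv.Perm (Fin (p + q)), ((Equiv.Perm.sign σ : ℤ) : ℝ) *
      α (fun i => v (σ (Fin.castAdd q i))) * β (fun j => v (σ (Fin.natAdd p j)))

/-- The dual covector ξ^# = ⟨ξ,·⟩, as a 1-form. -/
def dualCov (ξ : V7) : (Fin 1 → V7) → ℝ := fun v => ⟪ξ, v 0⟫

/-- The standard volume form e¹∧⋯∧e⁷ on ℝ⁷. -/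
def vol7 : (Fin 7 → V7) → ℝ := fun v => Matrix.det (Matrix.of fun i j => v i j)

/-! Expanding `R′ × z` by linearity in the first slot gives `√3 (R′ × z) = Σ (a × b) × z` over the
cyclic pairs `(a, b)` of `(u, v, w)`. Each term is evaluated by the identity
`(a × b) × c = χ(a, b, c) + ⟨a, c⟩ b - ⟨b, c⟩ a`; for `z ∈ {u, v, w}` the alternation of `χ`
leaves exactly one `χ`-term, equal to `R`, and orthonormality leaves `±` the two other frame vectors. -/

lemma Matrix.det_fin_four {R : Type*} [CommRing R] (A : Matrix (Fin 4) (Fin 4) R) :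
    A.det = A 0 0 * (A 1 1 * (A 2 2 * A 3 3 - A 2 3 * A 3 2) - A 1 2 * (A 2 1 * A 3 3 - A 2 3 * A 3 1)
        + A 1 3 * (A 2 1 * A 3 2 - A 2 2 * A 3 1))
      - A 0 1 * (A 1 0 * (A 2 2 * A 3 3 - A 2 3 * A 3 2) - A 1 2 * (A 2 0 * A 3 3 - A 2 3 * A 3 0)
        + A 1 3 * (A 2 0 * A 3 2 - A 2 2 * A 3 0))
      + A 0 2 * (A 1 0 * (A 2 1 * A 3 3 - A 2 3 * A 3 1) - A 1 1 * (A 2 0 * A 3 3 - A 2 3 * A 3 0)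
        + A 1 3 * (A 2 0 * A 3 1 - A 2 1 * A 3 0))
      - A 0 3 * (A 1 0 * (A 2 1 * A 3 2 - A 2 2 * A 3 1) - A 1 1 * (A 2 0 * A 3 2 - A 2 2 * A 3 0)
        + A 1 2 * (A 2 0 * A 3 1 - A 2 1 * A 3 0)) := by
  simp only [Matrix.det_succ_row_zero, Fin.sum_univ_succ, Matrix.submatrix_apply]
  simp [Fin.succAbove, Fin.lt_def]
  ring

lemma cross_add_left (x y z : V7) : cross (x + y) z = cross x z + cross y z := by
  ext i
  fin_cases i <;> simp [cross, phi0, Matrix.det_fin_three] <;> ring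

lemma cross_smul_left (r : ℝ) (x z : V7) : cross (r • x) z = r • cross x z := by
  ext i
  fin_cases i <;> simp [cross, phi0, Matrix.det_fin_three] <;> ring

lemma chi_self_left_right (a b : V7) : chi a b a = 0 := by
  ext i
  fin_cases i <;> simp [chi, starPhi0, Matrix.det_fin_four] <;> ring

lemma chi_self_mid_right (a b : V7) : chi a b b = 0 := by
  ext i
  fin_cases i <;> simp [chi, starPhi0, Matrix.det_fin_four] <;> ring

lemma chi_rotate (a b c : V7) : chi a b c = chi c a b := by
  ext i
  fin_cases i <;> simp [chi, starPhi0, Matrix.det_fin_four] <;> ring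

set_option maxHeartbeats 1000000 in
lemma cross_cross_eq_chi_add (a b c : V7) :
    cross (cross a b) c = chi a b c + ⟪a, c⟫ • b - ⟪b, c⟫ • a := by
  ext i
  fin_cases i <;>
  simp [cross, chi, phi0, starPhi0, Matrix.det_fin_three, Matrix.det_fin_four, Fin.sum_univ_seven,
    PiLp.single_apply, PiLp.inner_apply] <;> ring

theorem cross_R_prime_general (u v w : V7) (h : Orthonormal ℝ ![u, v, w])
    (R R' : V7) (hR : R = chi u v w)
    (hR' : R' = (Real.sqrt 3)⁻¹ • (cross u v + cross v w + cross w u)) :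
    Real.sqrt 3 • cross R' u = R + v - w ∧
    Real.sqrt 3 • cross R' v = R + w - u ∧
    Real.sqrt 3 • cross R' w = R + u - v := by
  obtain ⟨⟨huu, huv, huw⟩, ⟨hvu, hvv, hvw⟩, ⟨hwu, hwv, hww⟩⟩ :
      (⟪u, u⟫ = 1 ∧ ⟪u, v⟫ = 0 ∧ ⟪u, w⟫ = 0) ∧ (⟪v, u⟫ = 0 ∧ ⟪v, v⟫ = 1 ∧ ⟪v, w⟫ = 0) ∧
        (⟪w, u⟫ = 0 ∧ ⟪w, v⟫ = 0 ∧ ⟪w, w⟫ = 1) := by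
    simpa [orthonormal_iff_ite, Fin.forall_fin_succ] using h
  have hvwu : chi v w u = R := by rw [hR, chi_rotate]
  have hwuv : chi w u v = R := by rw [chi_rotate, hvwu]
  have expand (z : V7) : Real.sqrt 3 • cross R' z =
      cross (cross u v) z + cross (cross v w) z + cross (cross w u) z := by
    rw [hR', cross_smul_left, smul_smul, mul_inv_cancel₀ (by positivity), one_smul,
      cross_add_left, cross_add_left]
  refine ⟨?_, ?_, ?_⟩ <;>
  · simp only [expand, cross_cross_eq_chi_add, chi_self_left_right, chi_self_mid_right, hR,
      hvwu, hwuv, huu, huv, huw, hvu, hvv, hvw, hwu, hwv, hww]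
    module

/-- for a G₂-frame (u,v,w), R = χ(u,v,w) and
R′ = (u×v+v×w+w×u)/√3: √3(R′×u) = R+v−w, √3(R′×v) = R+w−u, √3(R′×w) = R+u−v. -/
theorem cross_R_prime (u v w : V7) (h : Orthonormal ℝ ![u, v, w])
    (hφ : phi0 ![u, v, w] = 0) (R R' : V7) (hR : R = chi u v w)
    (hR' : R' = (Real.sqrt 3)⁻¹ • (cross u v + cross v w + cross w u)) :
    Real.sqrt 3 • cross R' u = R + v - w ∧
    Real.sqrt 3 • cross R' v = R + w - u ∧
    Real.sqrt 3 • cross R' w = R + u - v :=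
  cross_R_prime_general u v w h R R' hR hR'

end
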